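/- arXiv:1005.5504 — 2 statements merged into one kernel-verified Lean document; each statement's English description precedes it below -/
import Mathlib

section
/- Suppose a smooth function R : ℝⁿ → ℝ satisfies the gradient identity ∇R = −2·Rc(∇φ, ·)♯ where Rc is a field of symmetric bilinear forms with 0 ≤ Rc ≤ Λ·R·g pointwise (Λ > 0 constant), R > 0, and |∇φ(x)| ≤ C(1+|x|). Then along any unit-speed ray γ(s) = s·v, the function u(s) = R(γ(s)) satisfies u'(s) ≥ −2ΛC(1+s)·u(s), hence R(γ(s)) ≥ R(γ(0))·exp(−2ΛC(s + s²/2)). -/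
open Real

/-- If a smooth positive function `R : ℝⁿ → ℝ` satisfies the gradient identity
`∇R = −2·Rc(∇φ, ·)♯`, where `Rc` is a field of symmetric bilinear forms with
`0 ≤ Rc ≤ Λ·R·g` pointwise (`Λ > 0`) and `|∇φ(x)| ≤ C(1+|x|)`, then along any
unit-speed ray `γ(s) = s·v` the function `u(s) = R(s·v)` satisfies
`u'(s) ≥ −2ΛC(1+s)·u(s)` for `s ≥ 0`, hence
`R(s·v) ≥ R(0)·exp(−2ΛC(s + s²/2))`. -/
theorem gradient_identity_lower_decay
    {n : ℕ} (R φ : EuclideanSpace ℝ (Fin n) → ℝ)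
    (hR : ContDiff ℝ (⊤ : ℕ∞) R) (hφ : ContDiff ℝ (⊤ : ℕ∞) φ)
    (Rc : EuclideanSpace ℝ (Fin n) →
      (EuclideanSpace ℝ (Fin n) →ₗ[ℝ] EuclideanSpace ℝ (Fin n) →ₗ[ℝ] ℝ))
    (hsymm : ∀ x v w, Rc x v w = Rc x w v)
    (Λ C : ℝ) (hΛ : 0 < Λ) (hC : 0 < C)
    (hRpos : ∀ x, 0 < R x)
    (hpsd : ∀ x v, 0 ≤ Rc x v v)
    (hub : ∀ x v, Rc x v v ≤ Λ * R x * ‖v‖ ^ 2)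
    (hgradφ : ∀ x, ‖gradient φ x‖ ≤ C * (1 + ‖x‖))
    (hid : ∀ x v, (inner ℝ (gradient R x) v : ℝ) = -2 * Rc x (gradient φ x) v) :
    ∀ v : EuclideanSpace ℝ (Fin n), ‖v‖ = 1 →
      (∀ s : ℝ, 0 ≤ s →
        -2 * Λ * C * (1 + s) * R (s • v) ≤ deriv (fun t : ℝ => R (t • v)) s) ∧
      (∀ s : ℝ, 0 ≤ s →
        R (0 : EuclideanSpace ℝ (Fin n)) * exp (-2 * Λ * C * (s + s ^ 2 / 2))
          ≤ R (s • v)) := by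
  -- Cauchy–Schwarz for the psd symmetric form
  have hCS : ∀ x w u, Rc x w u ≤ Λ * R x * (‖w‖ * ‖u‖) := by
    intro x w u
    have hq : ∀ t : ℝ, 0 ≤ (Rc x u u) * (t * t) + (2 * Rc x w u) * t + Rc x w w := by
      intro t
      have h := hpsd x (w + t • u)
      simp only [map_add, map_smul, LinearMap.add_apply, LinearMap.smul_apply,
        smul_eq_mul] at h
      rw [hsymm x u w] at h
      nlinarith [h]
    have hd := discrim_le_zero hq
    rw [discrim] at hd
    have h1 := hub x w
    have h2 := hub x u
    have hww := hpsd x w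
    have huu := hpsd x u
    have hnn : 0 ≤ Λ * R x := le_of_lt (mul_pos hΛ (hRpos x))
    nlinarith [sq_nonneg (‖w‖ * ‖u‖), norm_nonneg w, norm_nonneg u,
      mul_nonneg (norm_nonneg w) (norm_nonneg u), sq_nonneg (‖w‖ - ‖u‖),
      mul_nonneg (mul_nonneg hnn (norm_nonneg w)) (norm_nonneg u)]
  intro v hv
  have hRdiff : Differentiable ℝ R := hR.differentiable (by simp)
  -- derivative of u(t) = R (t • v)
  have hderiv : ∀ s : ℝ, HasDerivAt (fun t : ℝ => R (t • v))
      (-2 * Rc (s • v) (gradient φ (s • v)) v) s := by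
    intro s
    have h1 : HasDerivAt (fun t : ℝ => t • v) v s := by
      simpa using (hasDerivAt_id s).smul_const v
    have h2 := ((hRdiff (s • v)).hasFDerivAt).comp_hasDerivAt s h1
    have h3 : (fderiv ℝ R (s • v)) v = -2 * Rc (s • v) (gradient φ (s • v)) v := by
      rw [← hid (s • v) v]
      exact (InnerProductSpace.toDual_symm_apply).symm
    rwa [h3] at h2
  -- pointwise lower bound on the derivative, for s ≥ 0
  have hbound : ∀ s : ℝ, 0 ≤ s →
      -2 * Λ * C * (1 + s) * R (s • v) ≤ -2 * Rc (s • v) (gradient φ (s • v)) v := by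
    intro s hs
    have hnorm : ‖(s • v : EuclideanSpace ℝ (Fin n))‖ = s := by
      rw [norm_smul, hv, Real.norm_eq_abs, abs_of_nonneg hs, mul_one]
    have h1 : Rc (s • v) (gradient φ (s • v)) v
        ≤ Λ * R (s • v) * (‖gradient φ (s • v)‖ * ‖v‖) := hCS _ _ _
    have h2 : ‖gradient φ (s • v)‖ ≤ C * (1 + s) := by
      have := hgradφ (s • v); rwa [hnorm] at this
    have hnn : 0 ≤ Λ * R (s • v) := le_of_lt (mul_pos hΛ (hRpos _))
    have h3 : Λ * R (s • v) * (‖gradient φ (s • v)‖ * ‖v‖)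
        ≤ Λ * R (s • v) * (C * (1 + s)) := by
      rw [hv, mul_one]
      exact mul_le_mul_of_nonneg_left h2 hnn
    nlinarith [h1, h3]
  have hderiv_eq : ∀ s : ℝ, deriv (fun t : ℝ => R (t • v)) s
      = -2 * Rc (s • v) (gradient φ (s • v)) v := fun s => (hderiv s).deriv
  constructor
  · intro s hs
    rw [hderiv_eq s]
    exact hbound s hs
  · -- Grönwall via monotonicity of g(s) = R(s•v) * exp(2ΛC(s+s²/2))
    intro s hs
    set g : ℝ → ℝ := fun t => R (t • v) * exp (2 * Λ * C * (t + t ^ 2 / 2)) with hg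
    have hgderiv : ∀ t : ℝ, HasDerivAt g
        ((-2 * Rc (t • v) (gradient φ (t • v)) v) * exp (2 * Λ * C * (t + t ^ 2 / 2))
          + R (t • v) * (exp (2 * Λ * C * (t + t ^ 2 / 2)) * (2 * Λ * C * (1 + t)))) t := by
      intro t
      have he : HasDerivAt (fun t : ℝ => exp (2 * Λ * C * (t + t ^ 2 / 2)))
          (exp (2 * Λ * C * (t + t ^ 2 / 2)) * (2 * Λ * C * (1 + t))) t := by
        have hinner : HasDerivAt (fun t : ℝ => 2 * Λ * C * (t + t ^ 2 / 2))
            (2 * Λ * C * (1 + t)) t := by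
          have : HasDerivAt (fun t : ℝ => t + t ^ 2 / 2) (1 + t) t := by
            have h1 : HasDerivAt (fun t : ℝ => t) 1 t := hasDerivAt_id t
            have h2 : HasDerivAt (fun t : ℝ => t ^ 2 / 2) t t := by
              have := (hasDerivAt_pow 2 t).div_const 2
              simpa [mul_comm] using this
            exact h1.add h2
          exact this.const_mul (2 * Λ * C)
        exact hinner.exp
      exact (hderiv t).mul he
    have hmono : MonotoneOn g (Set.Ici (0 : ℝ)) := by
      apply monotoneOn_of_deriv_nonneg (convex_Ici 0)
      · exact fun t _ => (hgderiv t).continuousAt.continuousWithinAt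
      · intro t ht
        exact ((hgderiv t).differentiableAt).differentiableWithinAt
      · intro t ht
        rw [interior_Ici] at ht
        have ht' : (0 : ℝ) ≤ t := le_of_lt ht
        rw [(hgderiv t).deriv]
        have hb := hbound t ht'
        have hepos : (0 : ℝ) < exp (2 * Λ * C * (t + t ^ 2 / 2)) := exp_pos _
        nlinarith [mul_le_mul_of_nonneg_right hb (le_of_lt hepos)]
    have h0 : g 0 ≤ g s := hmono (Set.self_mem_Ici) (Set.mem_Ici.mpr hs) hs
    have hg0 : g 0 = R (0 : EuclideanSpace ℝ (Fin n)) := by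
      simp [hg]
    rw [hg0] at h0
    have hX : -2 * Λ * C * (s + s ^ 2 / 2) = -(2 * Λ * C * (s + s ^ 2 / 2)) := by ring
    rw [hX, Real.exp_neg]
    rw [mul_inv_le_iff₀' (exp_pos _)]
    calc R (0 : EuclideanSpace ℝ (Fin n)) ≤ g s := h0
      _ = exp (2 * Λ * C * (s + s ^ 2 / 2)) * R (s • v) := mul_comm _ _
end

section
/- Suppose g_{ij} = δ_{ij} + h_{ij} on ℝⁿ ∖ B(0,1) where h_{ij} = ∂_i∂_jφ − T_{ij} with φ smooth and both |T_{ij}(x)| and |∂_k T_{ij}(x)| bounded by C·exp(−α|x|²) (α > 0), and suppose ∂_i∂_i∂_jφ = ∂_j S + u_j with S, u_j also exponentially decaying together with their derivatives. Then the ADM-type mass m = lim_{r→∞} ∫_{S_r} (∂_i g_{ij} − ∂_j g_{ii}) ν_j dσ exists and equals 0. -/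
open Real MeasureTheory

/-- Euclidean partial derivative in the `i`-th coordinate direction. -/
noncomputable def pd {n : ℕ} (i : Fin n)
    (f : EuclideanSpace ℝ (Fin n) → ℝ) :
    EuclideanSpace ℝ (Fin n) → ℝ :=
  fun x => fderiv ℝ f x (EuclideanSpace.single i 1)

lemma contDiff_pd {n : ℕ} (i : Fin n) {f : EuclideanSpace ℝ (Fin n) → ℝ}
    (hf : ContDiff ℝ (⊤ : ℕ∞) f) : ContDiff ℝ (⊤ : ℕ∞) (pd i f) :=
  (hf.fderiv_right (by simp)).clm_apply contDiff_const

lemma pd_eval {n : ℕ} (k l : Fin n) {f : EuclideanSpace ℝ (Fin n) → ℝ}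
    (hf : ContDiff ℝ (⊤ : ℕ∞) f) (x : EuclideanSpace ℝ (Fin n)) :
    pd k (pd l f) x
      = fderiv ℝ (fderiv ℝ f) x (EuclideanSpace.single k 1) (EuclideanSpace.single l 1) := by
  have hd : DifferentiableAt ℝ (fderiv ℝ f) x :=
    ((hf.fderiv_right (m := (⊤ : ℕ∞)) (by simp)).differentiable (by simp)) x
  show fderiv ℝ (fun y => (fderiv ℝ f y) (EuclideanSpace.single l 1)) x _ = _
  rw [fderiv_clm_apply hd (differentiableAt_const _)]
  simp

lemma pd_comm {n : ℕ} {f : EuclideanSpace ℝ (Fin n) → ℝ} (hf : ContDiff ℝ (⊤ : ℕ∞) f)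
    (i j : Fin n) (x : EuclideanSpace ℝ (Fin n)) :
    pd i (pd j f) x = pd j (pd i f) x := by
  rw [pd_eval i j hf, pd_eval j i hf]
  exact second_derivative_symmetric
    (fun y => ((hf.differentiable (by simp)) y).hasFDerivAt)
    ((((hf.fderiv_right (m := (⊤ : ℕ∞)) (by simp)).differentiable (by simp)) x).hasFDerivAt) _ _

lemma pd_formula {n : ℕ} {φ : EuclideanSpace ℝ (Fin n) → ℝ}
    {gij Tij : EuclideanSpace ℝ (Fin n) → ℝ} (hφ : ContDiff ℝ (⊤ : ℕ∞) φ)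
    (hTij : ContDiff ℝ (⊤ : ℕ∞) Tij) (c : ℝ) (i j k : Fin n)
    (hmetric : ∀ y : EuclideanSpace ℝ (Fin n), 1 ≤ ‖y‖ →
      gij y = c + pd i (pd j φ) y - Tij y)
    (x : EuclideanSpace ℝ (Fin n)) (hx : 1 < ‖x‖) :
    pd k gij x = pd k (pd i (pd j φ)) x - pd k (Tij) x := by
  have hU : IsOpen {y : EuclideanSpace ℝ (Fin n) | 1 < ‖y‖} :=
    isOpen_lt continuous_const continuous_norm
  have hev : gij =ᶠ[nhds x] fun y => c + pd i (pd j φ) y - Tij y := by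
    filter_upwards [hU.mem_nhds hx] with y hy
    exact hmetric y (le_of_lt hy)
  have hA : DifferentiableAt ℝ (pd i (pd j φ)) x :=
    (contDiff_pd i (contDiff_pd j hφ)).differentiable (by simp) x
  have hB : DifferentiableAt ℝ Tij x := hTij.differentiable (by simp) x
  show fderiv ℝ gij x _ = _
  rw [hev.fderiv_eq, fderiv_fun_sub (by exact (differentiableAt_const c).add hA) hB,
    fderiv_const_add]
  simp [pd]

lemma coord_le_norm {k : ℕ} (z : EuclideanSpace ℝ (Fin k)) (i : Fin k) : |z i| ≤ ‖z‖ := by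
  rw [EuclideanSpace.norm_eq, ← Real.sqrt_sq_eq_abs]
  apply Real.sqrt_le_sqrt
  have := Finset.single_le_sum (f := fun j => ‖z j‖ ^ 2) (fun j _ => sq_nonneg _)
    (Finset.mem_univ i)
  simpa [Real.norm_eq_abs, sq_abs] using this

lemma normalize_lip {E : Type*} [NormedAddCommGroup E] [NormedSpace ℝ E] {x y : E}
    (hx : 1 ≤ ‖x‖) (hy : 1 ≤ ‖y‖) : ‖‖x‖⁻¹ • x - ‖y‖⁻¹ • y‖ ≤ 2 * ‖x - y‖ := by
  have hx0 : (0:ℝ) < ‖x‖ := lt_of_lt_of_le one_pos hx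
  have hy0 : (0:ℝ) < ‖y‖ := lt_of_lt_of_le one_pos hy
  have key : ‖x‖⁻¹ • x - ‖y‖⁻¹ • y = ‖x‖⁻¹ • (x - y) + (‖x‖⁻¹ - ‖y‖⁻¹) • y := by
    rw [smul_sub, sub_smul]; abel
  rw [key]
  have h1 : ‖‖x‖⁻¹ • (x - y)‖ ≤ ‖x - y‖ := by
    rw [norm_smul, Real.norm_eq_abs, abs_of_pos (inv_pos.2 hx0)]
    calc ‖x‖⁻¹ * ‖x - y‖ ≤ 1 * ‖x - y‖ := by
          apply mul_le_mul_of_nonneg_right _ (norm_nonneg _)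
          exact inv_le_one_of_one_le₀ hx
      _ = ‖x - y‖ := one_mul _
  have h2 : ‖(‖x‖⁻¹ - ‖y‖⁻¹) • y‖ ≤ ‖x - y‖ := by
    rw [norm_smul, Real.norm_eq_abs]
    have heq : ‖x‖⁻¹ - ‖y‖⁻¹ = (‖y‖ - ‖x‖) / (‖x‖ * ‖y‖) := by
      field_simp
    rw [heq, abs_div, abs_of_pos (mul_pos hx0 hy0), div_mul_eq_mul_div]
    rw [div_le_iff₀ (mul_pos hx0 hy0)]
    have hxy : |‖y‖ - ‖x‖| ≤ ‖x - y‖ :=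
      (abs_norm_sub_norm_le y x).trans (le_of_eq (norm_sub_rev y x))
    calc |‖y‖ - ‖x‖| * ‖y‖ ≤ ‖x - y‖ * ‖y‖ :=
          mul_le_mul_of_nonneg_right hxy (norm_nonneg _)
      _ ≤ ‖x - y‖ * (‖x‖ * ‖y‖) := by
          rw [mul_comm ‖x‖ ‖y‖]
          apply mul_le_mul_of_nonneg_left _ (norm_nonneg _)
          nlinarith
  calc ‖‖x‖⁻¹ • (x - y) + (‖x‖⁻¹ - ‖y‖⁻¹) • y‖
      ≤ ‖‖x‖⁻¹ • (x - y)‖ + ‖(‖x‖⁻¹ - ‖y‖⁻¹) • y‖ := norm_add_le _ _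
    _ ≤ ‖x - y‖ + ‖x - y‖ := add_le_add h1 h2
    _ = 2 * ‖x - y‖ := by ring

lemma sphere_bound (m : ℕ) : ∃ B : ENNReal, B ≠ ⊤ ∧ ∀ r : ℝ, 1 ≤ r →
    μH[(m:ℝ)] (Metric.sphere (0 : EuclideanSpace ℝ (Fin (m+1))) r) ≤
      B * (ENNReal.ofReal r) ^ m := by
  classical
  set E := EuclideanSpace ℝ (Fin (m+1))
  set K : Set (Fin m → ℝ) := Metric.closedBall 0 1 with hK
  -- Hausdorff measure of K is the Lebesgue measure, hence finite
  have hHpi : (μH[(m:ℝ)] : Measure (Fin m → ℝ)) = volume := by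
    simpa using hausdorffMeasure_pi_real (ι := Fin m)
  have hKfin : μH[(m:ℝ)] K ≠ ⊤ := by
    rw [hHpi]
    exact (isCompact_closedBall 0 1).measure_lt_top.ne
  set c₀ : NNReal := ((Fintype.card (Fin (m+1)) : NNReal) ^ ((1/(2:ENNReal)).toReal)) with hc₀
  refine ⟨((m:ENNReal)+1) * 2 * (2 * (c₀:ENNReal)) ^ m * μH[(m:ℝ)] K, ?_, ?_⟩
  · apply ENNReal.mul_ne_top
    apply ENNReal.mul_ne_top
    · exact ENNReal.mul_ne_top (by simp) (by simp)
    · exact ENNReal.pow_ne_top (ENNReal.mul_ne_top (by simp) ENNReal.coe_ne_top)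
    · exact hKfin
  intro r hr
  have hr0 : (0:ℝ) < r := lt_of_lt_of_le one_pos hr
  -- the maps
  set A : Fin (m+1) → ℝ → (Fin m → ℝ) → E := fun i s y =>
    (WithLp.equiv 2 (Fin (m+1) → ℝ)).symm (i.insertNth s y) with hA
  set N : E → E := fun x => r • (‖x‖⁻¹ • x) with hN
  set D : Set E := {x : E | 1 ≤ ‖x‖} with hD
  -- Lipschitz facts
  have hAlip : ∀ i s, LipschitzWith c₀ (A i s) := by
    intro i s
    have h1 : LipschitzWith 1 (fun y : Fin m → ℝ => (i.insertNth s y : Fin (m+1) → ℝ)) := by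
      apply LipschitzWith.of_edist_le
      intro y y'
      rw [edist_pi_le_iff]
      rw [Fin.forall_iff_succAbove i]
      constructor
      · simp
      · intro k
        simp only [Fin.insertNth_apply_succAbove]
        exact edist_le_pi_edist y y' k
    have h2 : LipschitzWith c₀ ((WithLp.equiv 2 (Fin (m+1) → ℝ)).symm) :=
      (PiLp.antilipschitzWith_ofLp 2 (fun _ : Fin (m+1) => ℝ)).to_rightInverse
        (fun x => rfl)
    simpa [hc₀, hA, Function.comp_def] using h2.comp h1
  have hNlip : LipschitzOnWith (Real.toNNReal (2*r)) N D := by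
    apply LipschitzOnWith.of_dist_le_mul
    intro x hx y hy
    have hx1 : 1 ≤ ‖x‖ := hx
    have hy1 : 1 ≤ ‖y‖ := hy
    rw [dist_eq_norm, hN]
    have : r • (‖x‖⁻¹ • x) - r • (‖y‖⁻¹ • y) = r • (‖x‖⁻¹ • x - ‖y‖⁻¹ • y) := by
      rw [smul_sub]
    rw [this, norm_smul, Real.norm_eq_abs, abs_of_pos hr0,
      Real.coe_toNNReal _ (by positivity)]
    calc r * ‖‖x‖⁻¹ • x - ‖y‖⁻¹ • y‖ ≤ r * (2 * ‖x - y‖) :=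
          mul_le_mul_of_nonneg_left (normalize_lip hx1 hy1) (le_of_lt hr0)
      _ = 2 * r * dist x y := by rw [dist_eq_norm]; ring
  -- maps-to
  have hmaps : ∀ i (s : ℝ), |s| = 1 → Set.MapsTo (A i s) K D := by
    intro i s hs y _
    have : (1:ℝ) ≤ ‖A i s y‖ := by
      have := coord_le_norm (A i s y) i
      have hcoord : (A i s y) i = s := by
        simp [hA]
      rw [hcoord, hs] at this
      exact this
    exact this
  -- covering
  have hcover : Metric.sphere (0 : E) r ⊆
      ⋃ i : Fin (m+1), (N ∘ A i 1) '' K ∪ (N ∘ A i (-1)) '' K := by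
    intro z hz
    have hznorm : ‖z‖ = r := by simpa using hz
    have hz0 : z ≠ 0 := by
      intro h; rw [h, norm_zero] at hznorm; exact absurd hznorm.symm (ne_of_gt hr0)
    obtain ⟨i, -, hi⟩ := Finset.exists_max_image Finset.univ (fun j => |z j|)
      ⟨⟨0, Nat.succ_pos m⟩, Finset.mem_univ _⟩
    have hi' : ∀ j, |z j| ≤ |z i| := fun j => hi j (Finset.mem_univ j)
    have hzi : z i ≠ 0 := by
      intro h
      apply hz0
      have : ∀ j, z j = 0 := by
        intro j
        have := hi' j
        rw [h, abs_zero] at this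
        exact abs_eq_zero.1 (le_antisymm this (abs_nonneg _))
      ext j; simpa using this j
    set c := z i with hc
    have hcabs : (0:ℝ) < |c| := abs_pos.2 hzi
    set s : ℝ := if 0 ≤ c then 1 else -1 with hs
    have hsabs : |s| = 1 := by
      rw [hs]; split <;> simp
    have hsc : s * |c| = c := by
      rw [hs]; split
      · rw [abs_of_nonneg ‹_›]; ring
      · rw [abs_of_neg (lt_of_not_ge ‹_›)]; ring
    set y : Fin m → ℝ := fun j => z (i.succAbove j) / |c| with hy
    have hyK : y ∈ K := by
      rw [hK, Metric.mem_closedBall, dist_zero_right]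
      apply pi_norm_le_iff_of_nonneg zero_le_one |>.2
      intro j
      rw [Real.norm_eq_abs, hy, abs_div, abs_abs, div_le_one hcabs]
      exact hi' _
    have hxA : A i s y = |c|⁻¹ • z := by
      show (WithLp.equiv 2 (Fin (m+1) → ℝ)).symm (i.insertNth s y) = |c|⁻¹ • z
      apply congrArg
      rw [Fin.insertNth_eq_iff]
      constructor
      · show s = (|c|⁻¹ • z) i
        show s = |c|⁻¹ * z i
        field_simp
        linarith [hsc]
      · funext j
        show y j = (|c|⁻¹ • z) (i.succAbove j)
        show y j = |c|⁻¹ * z (i.succAbove j)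
        rw [hy]
        field_simp
    have hnx : ‖A i s y‖ = r / |c| := by
      rw [hxA, norm_smul, Real.norm_eq_abs, abs_inv, abs_abs, hznorm]
      field_simp
    have hNz : N (A i s y) = z := by
      rw [hN]
      show r • (‖A i s y‖⁻¹ • A i s y) = z
      rw [hnx, hxA, smul_smul, smul_smul]
      have : r * (r / |c|)⁻¹ * |c|⁻¹ = 1 := by
        field_simp
      rw [this, one_smul]
    apply Set.mem_iUnion.2 ⟨i, ?_⟩
    by_cases h0c : 0 ≤ c
    · left
      refine ⟨y, hyK, ?_⟩
      simp only [Function.comp_apply]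
      rw [hs, if_pos h0c] at hNz
      exact hNz
    · right
      refine ⟨y, hyK, ?_⟩
      simp only [Function.comp_apply]
      rw [hs, if_neg h0c] at hNz
      exact hNz
  -- measure estimate
  have himg : ∀ i (s : ℝ), |s| = 1 →
      μH[(m:ℝ)] ((N ∘ A i s) '' K) ≤ (2 * (c₀:ENNReal)) ^ m * (ENNReal.ofReal r) ^ m
        * μH[(m:ℝ)] K := by
    intro i s hs
    have hcomp : LipschitzOnWith (Real.toNNReal (2*r) * c₀) (N ∘ A i s) K :=
      hNlip.comp (hAlip i s).lipschitzOnWith (hmaps i s hs)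
    calc μH[(m:ℝ)] ((N ∘ A i s) '' K)
        ≤ ((Real.toNNReal (2*r) * c₀ : NNReal) : ENNReal) ^ (m:ℝ) * μH[(m:ℝ)] K :=
          hcomp.hausdorffMeasure_image_le (by positivity)
      _ = ((Real.toNNReal (2*r) * c₀ : NNReal) : ENNReal) ^ m * μH[(m:ℝ)] K := by
          rw [ENNReal.rpow_natCast]
      _ ≤ (2 * (c₀:ENNReal)) ^ m * (ENNReal.ofReal r) ^ m * μH[(m:ℝ)] K := by
          apply mul_le_mul_left
          rw [← mul_pow]
          apply pow_le_pow_left' _ m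
          rw [Real.toNNReal_mul (by norm_num : (0:ℝ) ≤ 2), ENNReal.coe_mul, ENNReal.coe_mul]
          have h2 : ((Real.toNNReal 2 : NNReal) : ENNReal) = 2 := by norm_num
          have hofr : (ENNReal.ofReal r) = ((Real.toNNReal r : NNReal) : ENNReal) := rfl
          rw [h2, hofr]
          exact le_of_eq (by ring)
  calc μH[(m:ℝ)] (Metric.sphere (0 : E) r)
      ≤ μH[(m:ℝ)] (⋃ i : Fin (m+1), (N ∘ A i 1) '' K ∪ (N ∘ A i (-1)) '' K) :=
        measure_mono hcover
    _ ≤ ∑ i : Fin (m+1), μH[(m:ℝ)] ((N ∘ A i 1) '' K ∪ (N ∘ A i (-1)) '' K) :=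
        measure_iUnion_fintype_le _ _
    _ ≤ ∑ i : Fin (m+1), ((2 * (c₀:ENNReal)) ^ m * (ENNReal.ofReal r) ^ m * μH[(m:ℝ)] K
          + (2 * (c₀:ENNReal)) ^ m * (ENNReal.ofReal r) ^ m * μH[(m:ℝ)] K) := by
        apply Finset.sum_le_sum
        intro i _
        exact le_trans (measure_union_le _ _)
          (add_le_add (himg i 1 (by norm_num)) (himg i (-1) (by norm_num)))
    _ = ((m:ENNReal)+1) * 2 * (2 * (c₀:ENNReal)) ^ m * μH[(m:ℝ)] K
          * (ENNReal.ofReal r) ^ m := by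
        rw [Finset.sum_const, Finset.card_univ, Fintype.card_fin, nsmul_eq_mul]
        push_cast
        ring
/-- Suppose `g_{ij} = δ_{ij} + ∂_i∂_jφ − T_{ij}` outside the unit ball, with `T`
and its first derivatives exponentially decaying, and suppose
`∑_i ∂_i∂_i∂_jφ = ∂_j S + u_j` with `S`, `u_j` exponentially decaying together
with their derivatives. Then the ADM-type mass
`m = lim_{r→∞} ∫_{S_r} (∂_i g_{ij} − ∂_j g_{ii}) ν_j dσ` exists and equals `0`. -/
theorem soliton_mass_vanishes
    {n : ℕ}
    (φ S : EuclideanSpace ℝ (Fin n) → ℝ)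
    (g T : Fin n → Fin n → EuclideanSpace ℝ (Fin n) → ℝ)
    (u : Fin n → EuclideanSpace ℝ (Fin n) → ℝ)
    (hφ : ContDiff ℝ (⊤ : ℕ∞) φ) (hS : ContDiff ℝ (⊤ : ℕ∞) S)
    (hg : ∀ i j, ContDiff ℝ (⊤ : ℕ∞) (g i j))
    (hT : ∀ i j, ContDiff ℝ (⊤ : ℕ∞) (T i j))
    (hu : ∀ j, ContDiff ℝ (⊤ : ℕ∞) (u j))
    (C α : ℝ) (hC : 0 < C) (hα : 0 < α)
    (hmetric : ∀ i j x, 1 ≤ ‖x‖ →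
      g i j x = (if i = j then (1 : ℝ) else 0) + pd i (pd j φ) x - T i j x)
    (hTdecay : ∀ i j x, |T i j x| ≤ C * exp (-α * ‖x‖ ^ 2))
    (hdTdecay : ∀ i j k x, |pd k (T i j) x| ≤ C * exp (-α * ‖x‖ ^ 2))
    (hricci : ∀ j x, (∑ i, pd i (pd i (pd j φ)) x) = pd j S x + u j x)
    (hSdecay : ∀ x, |S x| ≤ C * exp (-α * ‖x‖ ^ 2))
    (hdSdecay : ∀ k x, |pd k S x| ≤ C * exp (-α * ‖x‖ ^ 2))
    (hudecay : ∀ j x, |u j x| ≤ C * exp (-α * ‖x‖ ^ 2))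
    (hdudecay : ∀ j k x, |pd k (u j) x| ≤ C * exp (-α * ‖x‖ ^ 2)) :
    Filter.Tendsto
      (fun r : ℝ => ∫ x in Metric.sphere (0 : EuclideanSpace ℝ (Fin n)) r,
        ∑ j, (∑ i, (pd i (g i j) x - pd j (g i i) x)) * (x j / r)
        ∂(μH[(n : ℝ) - 1]))
      Filter.atTop (nhds 0) := by
  obtain _ | m := n
  · simp only [Finset.univ_eq_empty, Finset.sum_empty, integral_zero]
    exact tendsto_const_nhds
  have hcast : ((m + 1 : ℕ) : ℝ) - 1 = (m : ℝ) := by push_cast; ring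
  rw [hcast]
  obtain ⟨B, hBtop, hB⟩ := sphere_bound m
  -- tendsto of the dominating function
  have h2 : Filter.Tendsto (fun r : ℝ => α * r ^ 2) Filter.atTop Filter.atTop :=
    (Filter.tendsto_pow_atTop (by norm_num : 2 ≠ 0)).const_mul_atTop hα
  have h3 : Filter.Tendsto (fun r : ℝ => (α * r ^ 2) ^ m * exp (-(α * r ^ 2)))
      Filter.atTop (nhds 0) :=
    (tendsto_pow_mul_exp_neg_atTop_nhds_zero m).comp h2
  have h4 : Filter.Tendsto
      (fun r : ℝ => (α⁻¹) ^ m * ((α * r ^ 2) ^ m * exp (-(α * r ^ 2))))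
      Filter.atTop (nhds 0) := by
    simpa using h3.const_mul ((α⁻¹) ^ m)
  have h5 : Filter.Tendsto (fun r : ℝ => r ^ m * exp (-α * r ^ 2))
      Filter.atTop (nhds 0) := by
    apply squeeze_zero' ?_ ?_ h4
    · filter_upwards [Filter.eventually_ge_atTop 0] with r hr
      positivity
    · filter_upwards [Filter.eventually_ge_atTop 1] with r hr1
      have hr0 : (0:ℝ) ≤ r := by linarith
      have hkey : r ^ m ≤ (α⁻¹) ^ m * (α * r ^ 2) ^ m := by
        rw [← mul_pow]
        apply pow_le_pow_left₀ hr0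
        have : α⁻¹ * (α * r ^ 2) = r ^ 2 := by field_simp
        rw [this]
        nlinarith
      calc r ^ m * exp (-α * r ^ 2)
          ≤ ((α⁻¹) ^ m * (α * r ^ 2) ^ m) * exp (-α * r ^ 2) :=
            mul_le_mul_of_nonneg_right hkey (exp_nonneg _)
        _ = (α⁻¹) ^ m * ((α * r ^ 2) ^ m * exp (-(α * r ^ 2))) := by
            rw [neg_mul]; ring
  have hKg : Filter.Tendsto
      (fun r : ℝ => (2 * ((m + 1 : ℕ) : ℝ) ^ 2 * C * B.toReal) *
        (r ^ m * exp (-α * r ^ 2))) Filter.atTop (nhds 0) := by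
    simpa using h5.const_mul (2 * ((m + 1 : ℕ) : ℝ) ^ 2 * C * B.toReal)
  apply squeeze_zero_norm' ?_ hKg
  filter_upwards [Filter.eventually_ge_atTop 2] with r hr2
  have hr1 : (1:ℝ) ≤ r := by linarith
  have hr0 : (0:ℝ) < r := by linarith
  -- pointwise bound on the sphere
  have hbound : ∀ x ∈ Metric.sphere (0 : EuclideanSpace ℝ (Fin (m + 1))) r,
      ‖∑ j, (∑ i, (pd i (g i j) x - pd j (g i i) x)) * (x j / r)‖ ≤
        2 * ((m + 1 : ℕ) : ℝ) ^ 2 * C * exp (-α * r ^ 2) := by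
    intro x hx
    have hxr : ‖x‖ = r := by simpa using hx
    have hx1 : 1 < ‖x‖ := by rw [hxr]; linarith
    have hterm : ∀ j, |∑ i, (pd i (g i j) x - pd j (g i i) x)| ≤
        ((m + 1 : ℕ) : ℝ) * (2 * C * exp (-α * r ^ 2)) := by
      intro j
      have hptw : ∀ i, pd i (g i j) x - pd j (g i i) x
          = pd j (T i i) x - pd i (T i j) x := by
        intro i
        have e1 := pd_formula hφ (hT i j) (if i = j then (1:ℝ) else 0) i j i
          (fun y hy => hmetric i j y hy) x hx1
        have e2 := pd_formula hφ (hT i i) (if i = i then (1:ℝ) else 0) i i j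
          (fun y hy => hmetric i i y hy) x hx1
        have comm : pd i (pd i (pd j φ)) x = pd j (pd i (pd i φ)) x := by
          have h1 : pd i (pd j φ) = pd j (pd i φ) := funext (pd_comm hφ i j)
          rw [h1]
          exact pd_comm (contDiff_pd i hφ) i j x
        rw [e1, e2, comm]; ring
      calc |∑ i, (pd i (g i j) x - pd j (g i i) x)|
          = |∑ i, (pd j (T i i) x - pd i (T i j) x)| := by
            congr 1; exact Finset.sum_congr rfl fun i _ => hptw i
        _ ≤ ∑ i, |pd j (T i i) x - pd i (T i j) x| := Finset.abs_sum_le_sum_abs _ _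
        _ ≤ ∑ _i : Fin (m + 1), (2 * C * exp (-α * r ^ 2)) := by
            apply Finset.sum_le_sum
            intro i _
            have d1 := hdTdecay i i j x
            have d2 := hdTdecay i j i x
            rw [hxr] at d1 d2
            have habs : |pd j (T i i) x - pd i (T i j) x|
                ≤ |pd j (T i i) x| + |pd i (T i j) x| := by
              rw [sub_eq_add_neg]
              refine (abs_add_le _ _).trans ?_
              rw [abs_neg]
            linarith
        _ = ((m + 1 : ℕ) : ℝ) * (2 * C * exp (-α * r ^ 2)) := by
            rw [Finset.sum_const, Finset.card_univ, Fintype.card_fin, nsmul_eq_mul]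
    have hcoordb : ∀ j : Fin (m + 1), |x j / r| ≤ 1 := by
      intro j
      rw [abs_div, abs_of_pos hr0, div_le_one hr0]
      rw [← hxr]
      exact coord_le_norm x j
    calc ‖∑ j, (∑ i, (pd i (g i j) x - pd j (g i i) x)) * (x j / r)‖
        ≤ ∑ j, |(∑ i, (pd i (g i j) x - pd j (g i i) x)) * (x j / r)| := by
          rw [Real.norm_eq_abs]
          exact Finset.abs_sum_le_sum_abs _ _
      _ ≤ ∑ _j : Fin (m + 1), ((m + 1 : ℕ) : ℝ) * (2 * C * exp (-α * r ^ 2)) := by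
          apply Finset.sum_le_sum
          intro j _
          rw [abs_mul]
          calc |∑ i, (pd i (g i j) x - pd j (g i i) x)| * |x j / r|
              ≤ (((m + 1 : ℕ) : ℝ) * (2 * C * exp (-α * r ^ 2))) * 1 := by
                apply mul_le_mul (hterm j) (hcoordb j) (abs_nonneg _)
                have hCe : (0:ℝ) ≤ 2 * C * exp (-α * r ^ 2) := by
                  have := exp_nonneg (-α * r ^ 2)
                  nlinarith
                positivity
            _ = ((m + 1 : ℕ) : ℝ) * (2 * C * exp (-α * r ^ 2)) := mul_one _
      _ = 2 * ((m + 1 : ℕ) : ℝ) ^ 2 * C * exp (-α * r ^ 2) := by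
          rw [Finset.sum_const, Finset.card_univ, Fintype.card_fin, nsmul_eq_mul]
          ring
  -- measure of the sphere is finite
  have hμle := hB r hr1
  have hrpow : (ENNReal.ofReal r) ^ m ≠ ⊤ := ENNReal.pow_ne_top ENNReal.ofReal_ne_top
  have hμfin : μH[(m : ℝ)] (Metric.sphere (0 : EuclideanSpace ℝ (Fin (m + 1))) r) < ⊤ :=
    lt_of_le_of_lt hμle (ENNReal.mul_lt_top hBtop.lt_top hrpow.lt_top)
  -- continuity / measurability of the integrand
  have hcont : Continuous fun x : EuclideanSpace ℝ (Fin (m + 1)) =>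
      ∑ j, (∑ i, (pd i (g i j) x - pd j (g i i) x)) * (x j / r) := by
    apply continuous_finset_sum
    intro j _
    apply Continuous.mul
    · apply continuous_finset_sum
      intro i _
      exact ((contDiff_pd i (hg i j)).continuous).sub ((contDiff_pd j (hg i i)).continuous)
    · exact ((EuclideanSpace.proj (𝕜 := ℝ) j).continuous).div_const r
  have hint := norm_setIntegral_le_of_norm_le_const hμfin hbound
  refine hint.trans ?_
  have htoReal : (μH[(m : ℝ)]
      (Metric.sphere (0 : EuclideanSpace ℝ (Fin (m + 1))) r)).toReal ≤ B.toReal * r ^ m := by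
    have h := ENNReal.toReal_mono (ENNReal.mul_ne_top hBtop hrpow) hμle
    rwa [ENNReal.toReal_mul, ENNReal.toReal_pow, ENNReal.toReal_ofReal hr0.le] at h
  have hCe : (0:ℝ) ≤ 2 * ((m + 1 : ℕ) : ℝ) ^ 2 * C * exp (-α * r ^ 2) :=
    mul_nonneg (mul_nonneg (mul_nonneg (by norm_num) (sq_nonneg _)) hC.le)
      (exp_nonneg _)
  calc 2 * ((m + 1 : ℕ) : ℝ) ^ 2 * C * exp (-α * r ^ 2) *
        (μH[(m : ℝ)] (Metric.sphere (0 : EuclideanSpace ℝ (Fin (m + 1))) r)).toReal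
      ≤ 2 * ((m + 1 : ℕ) : ℝ) ^ 2 * C * exp (-α * r ^ 2) * (B.toReal * r ^ m) :=
        mul_le_mul_of_nonneg_left htoReal hCe
    _ = 2 * ((m + 1 : ℕ) : ℝ) ^ 2 * C * B.toReal * (r ^ m * exp (-α * r ^ 2)) := by ring
end
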